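/- For k ∈ ℕ and 2 ≤ p < ∞ with conjugate exponent q = p/(p-1), define γ_k(p) := Γ(1/p) Γ(1/q + k/2) / (Γ(1/q) Γ(1/p + k/2)). Then 1/2 ≤ γ_k(p) / (k^{1 - 2/p} (p-1)) ≤ 1, and both constants 1/2 and 1 are optimal. -/

import Mathlib

/-!
Put `x = 1/p`, `y = 1 - 1/p` and `φ_k(x) = Γ(x + k/2) / (Γ(x + 1) k^x)` (`gammaPhi`). Then the
normalized ratio is `φ_k(y) / φ_k(x)`, so everything follows once `φ_k` is antitone on `[0, ∞)`:
the ratio lies between `φ_k(1) / φ_k(0) = 1/2` and `1`, equals `1` at `p = 2`, and tends to `1/2`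
as `p → ∞`.

For the monotonicity let `d = ⌊(k - 1)/2⌋`, so that `k/2 ≤ d + 1` and `2d + 1 ≤ k`. By
log-convexity of Γ, `Γ(x + k/2) / Γ(x + 1 + d)` is antitone, while
`Γ(x + 1 + d) / Γ(x + 1) = (x + 1) ⋯ (x + d)` grows at most like `exp (x H_d)`, and
`H_d ≤ log (2d + 1) ≤ log k` because `1/j ≤ log ((2j + 1)/(2j - 1))`.
-/

open Real

/-- `γ_k(p) = Γ(1/p) Γ(1/q + k/2) / (Γ(1/q) Γ(1/p + k/2))` with `q = p/(p-1)`. -/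
noncomputable def gammaRatio (k : ℕ) (p : ℝ) : ℝ :=
  Real.Gamma (1 / p) * Real.Gamma ((1 - 1 / p) + k / 2) /
    (Real.Gamma (1 - 1 / p) * Real.Gamma (1 / p + k / 2))

open Set Filter Topology

theorem ConvexOn.map_add_sub_map_le {𝕜 : Type*} [Field 𝕜] [LinearOrder 𝕜] [IsStrictOrderedRing 𝕜]
    {s : Set 𝕜} {f : 𝕜 → 𝕜} (hf : ConvexOn 𝕜 s f) {u v c : 𝕜}
    (hu : u ∈ s) (hvc : v + c ∈ s) (huv : u ≤ v) (hc : 0 ≤ c) :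
    f (u + c) - f u ≤ f (v + c) - f v := by
  obtain hL | hL := (add_nonneg (sub_nonneg.2 huv) hc).eq_or_lt
  · obtain rfl : c = 0 := by linarith
    obtain rfl : v = u := by linarith
    rfl
  -- `v` and `u + c` are convex combinations of `u` and `v + c` with swapped weights
  have hv := hf.2 hu hvc (div_nonneg hc hL.le) (div_nonneg (sub_nonneg.2 huv) hL.le)
    (by field_simp; ring)
  have huc := hf.2 hu hvc (div_nonneg (sub_nonneg.2 huv) hL.le) (div_nonneg hc hL.le)
    (by field_simp)
  simp only [smul_eq_mul] at hv huc
  rw [show c / (v - u + c) * u + (v - u) / (v - u + c) * (v + c) = v by field_simp; ring] at hv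
  rw [show (v - u) / (v - u + c) * u + c / (v - u + c) * (v + c) = u + c by field_simp; ring] at huc
  have hcombine : c / (v - u + c) * f u + (v - u) / (v - u + c) * f (v + c)
      + ((v - u) / (v - u + c) * f u + c / (v - u + c) * f (v + c)) = f u + f (v + c) := by
    field_simp; ring
  linarith

theorem Real.Gamma_mul_Gamma_add_le {u v c : ℝ} (hu : 0 < u) (huv : u ≤ v) (hc : 0 ≤ c) :
    Gamma v * Gamma (u + c) ≤ Gamma u * Gamma (v + c) := by
  have h := convexOn_log_Gamma.map_add_sub_map_le hu (show 0 < v + c by linarith) huv hc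
  simp only [Function.comp] at h
  have := Gamma_pos_of_pos hu
  have := Gamma_pos_of_pos (show 0 < v by linarith)
  have := Gamma_pos_of_pos (show 0 < u + c by linarith)
  have := Gamma_pos_of_pos (show 0 < v + c by linarith)
  rw [← log_le_log_iff (by positivity) (by positivity), log_mul (by positivity) (by positivity),
    log_mul (by positivity) (by positivity)]
  linarith

theorem Real.two_div_le_log_one_add_inv {a : ℝ} (ha : 0 < a) : 2 / (2 * a + 1) ≤ log (1 + a⁻¹) := by
  have h := le_hasSum (hasSum_log_one_add_inv ha) 0 (fun j _ => by positivity)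
  simpa [div_eq_mul_inv] using h

theorem harmonic_le_log_two_mul_add_one (d : ℕ) : (harmonic d : ℝ) ≤ log (2 * d + 1) := by
  induction d with
  | zero => simp
  | succ d ih =>
    have h := two_div_le_log_one_add_inv (a := d + 1 / 2) (by positivity)
    have e1 : 2 / (2 * (d + 1 / 2 : ℝ) + 1) = ((d + 1 : ℕ) : ℝ)⁻¹ := by push_cast; field_simp; ring
    have e2 : (1 + (d + 1 / 2 : ℝ)⁻¹) = (2 * (d + 1 : ℕ) + 1) / (2 * d + 1) := by
      push_cast; field_simp; ring
    rw [e1, e2, log_div (by positivity) (by positivity)] at h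
    push_cast [harmonic_succ] at h ⊢
    linarith

theorem Real.Gamma_add_nat_mul_Gamma_le_exp_harmonic {x y : ℝ} (hx : 1 ≤ x) (hxy : x ≤ y) (d : ℕ) :
    Gamma (y + d) * Gamma x ≤ Gamma (x + d) * Gamma y * exp ((y - x) * harmonic d) := by
  induction d with
  | zero => simp [mul_comm]
  | succ d ih =>
    have hxd : 0 < x + d := by positivity
    have hstep : y + d ≤ (x + d) * exp ((y - x) * ((d : ℝ) + 1)⁻¹) := by
      have : (y - x) * (x + d)⁻¹ ≤ (y - x) * ((d : ℝ) + 1)⁻¹ :=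
        mul_le_mul_of_nonneg_left (inv_anti₀ (by positivity) (by linarith)) (by linarith)
      calc y + d = (x + d) * ((y - x) * (x + d)⁻¹ + 1) := by field_simp; ring
        _ ≤ _ := by gcongr; linarith [add_one_le_exp ((y - x) * ((d : ℝ) + 1)⁻¹)]
    have hGyd := Gamma_pos_of_pos (show 0 < y + d by linarith)
    push_cast [harmonic_succ]
    rw [← add_assoc, Gamma_add_one (by linarith), ← add_assoc, Gamma_add_one hxd.ne',
      mul_add, exp_add]
    calc (y + d) * Gamma (y + d) * Gamma x
        = (y + d) * (Gamma (y + d) * Gamma x) := by ring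
      _ ≤ (x + d) * exp ((y - x) * ((d : ℝ) + 1)⁻¹) *
          (Gamma (x + d) * Gamma y * exp ((y - x) * harmonic d)) := by
          gcongr
      _ = _ := by ring

theorem Real.Gamma_add_half_mul_Gamma_le {k : ℕ} (hk : 0 < k) {a b : ℝ} (ha : 0 ≤ a) (hab : a ≤ b) :
    Gamma (b + k / 2) * Gamma (a + 1) ≤ Gamma (a + k / 2) * Gamma (b + 1) * (k : ℝ) ^ (b - a) := by
  have hb : 0 ≤ b := ha.trans hab
  set d := (k - 1) / 2
  have hdt : (k : ℝ) / 2 ≤ d + 1 := by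
    have : k ≤ 2 * d + 2 := by omega
    have : (k : ℝ) ≤ 2 * d + 2 := by exact_mod_cast this
    linarith
  have hdk : (2 * d + 1 : ℝ) ≤ k := by exact_mod_cast (show 2 * d + 1 ≤ k by omega)
  -- log-convexity moves the shift `k / 2` up to the integer `d + 1`, where Γ is a polynomial
  have hshift : Gamma (b + k / 2) * Gamma (a + 1 + d) ≤ Gamma (a + k / 2) * Gamma (b + 1 + d) := by
    have h := Gamma_mul_Gamma_add_le (u := a + k / 2) (v := b + k / 2) (c := d + 1 - k / 2)
      (by positivity) (by linarith) (by linarith)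
    rwa [show a + k / 2 + (d + 1 - k / 2) = a + 1 + d by ring,
      show b + k / 2 + (d + 1 - k / 2) = b + 1 + d by ring] at h
  have hpoly := Gamma_add_nat_mul_Gamma_le_exp_harmonic (x := a + 1) (y := b + 1)
    (by linarith) (by linarith) d
  have hharm : exp ((b - a) * harmonic d) ≤ (k : ℝ) ^ (b - a) := by
    rw [rpow_def_of_pos (by positivity), mul_comm (log k)]
    gcongr
    exact (harmonic_le_log_two_mul_add_one d).trans (log_le_log (by positivity) hdk)
  have hGad := Gamma_pos_of_pos (show 0 < a + 1 + d by positivity)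
  have hGbd := Gamma_pos_of_pos (show 0 < b + 1 + d by positivity)
  refine le_of_mul_le_mul_right ?_ (mul_pos hGad hGbd)
  calc Gamma (b + k / 2) * Gamma (a + 1) * (Gamma (a + 1 + d) * Gamma (b + 1 + d))
      = Gamma (b + k / 2) * Gamma (a + 1 + d) * (Gamma (b + 1 + d) * Gamma (a + 1)) := by ring
    _ ≤ Gamma (a + k / 2) * Gamma (b + 1 + d) *
        (Gamma (a + 1 + d) * Gamma (b + 1) * exp ((b + 1 - (a + 1)) * harmonic d)) := by
      gcongr
    _ ≤ Gamma (a + k / 2) * Gamma (b + 1 + d) *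
        (Gamma (a + 1 + d) * Gamma (b + 1) * (k : ℝ) ^ (b - a)) := by
      rw [show b + 1 - (a + 1) = b - a by ring]
      gcongr
    _ = _ := by ring

noncomputable def gammaPhi (k : ℕ) (x : ℝ) : ℝ :=
  Gamma (x + k / 2) / (Gamma (x + 1) * (k : ℝ) ^ x)

section gammaPhi

variable {k : ℕ}

theorem gammaPhi_pos (hk : 0 < k) {x : ℝ} (hx : 0 ≤ x) : 0 < gammaPhi k x := by
  unfold gammaPhi; positivity

theorem gammaPhi_antitoneOn (hk : 0 < k) : AntitoneOn (gammaPhi k) (Ici 0) := by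
  intro a (ha : 0 ≤ a) b (hb : 0 ≤ b) hab
  have hk0 : (0 : ℝ) < k := by exact_mod_cast hk
  unfold gammaPhi
  rw [div_le_div_iff₀ (by positivity) (by positivity),
    show (k : ℝ) ^ b = (k : ℝ) ^ (b - a) * (k : ℝ) ^ a by rw [← rpow_add hk0]; ring_nf]
  calc Gamma (b + k / 2) * (Gamma (a + 1) * (k : ℝ) ^ a)
      = Gamma (b + k / 2) * Gamma (a + 1) * (k : ℝ) ^ a := by ring
    _ ≤ Gamma (a + k / 2) * Gamma (b + 1) * (k : ℝ) ^ (b - a) * (k : ℝ) ^ a :=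
      mul_le_mul_of_nonneg_right (Gamma_add_half_mul_Gamma_le hk ha hab) (by positivity)
    _ = _ := by ring

theorem gammaPhi_one_div_gammaPhi_zero (hk : 0 < k) : gammaPhi k 1 / gammaPhi k 0 = 1 / 2 := by
  have hk0 : (0 : ℝ) < k := by exact_mod_cast hk
  have := Gamma_pos_of_pos (show (0 : ℝ) < k / 2 by positivity)
  unfold gammaPhi
  rw [add_comm 1, Gamma_add_one (by positivity)]
  simp only [zero_add, one_add_one_eq_two, Gamma_two, Gamma_one, rpow_one, rpow_zero]
  field_simp

theorem continuousAt_gammaPhi (hk : 0 < k) {x : ℝ} (hx : 0 ≤ x) : ContinuousAt (gammaPhi k) x := by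
  have hGamma : ∀ s : ℝ, 0 < s → ContinuousAt Gamma s := fun s hs =>
    (differentiableAt_Gamma fun m => by linarith [(m.cast_nonneg : (0 : ℝ) ≤ m)]).continuousAt
  have hk0 : (0 : ℝ) < k := by exact_mod_cast hk
  unfold gammaPhi
  exact ((hGamma _ (by positivity)).comp (by fun_prop)).div
    (((hGamma _ (by positivity)).comp (by fun_prop)).mul
      (continuousAt_const.rpow continuousAt_id (Or.inl hk0.ne'))) (by positivity)

theorem gammaRatio_div_eq_gammaPhi_div (hk : 0 < k) {p : ℝ} (hp : 1 < p) :
    gammaRatio k p / ((k : ℝ) ^ (1 - 2 / p) * (p - 1)) =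
      gammaPhi k (1 - 1 / p) / gammaPhi k (1 / p) := by
  have hk0 : (0 : ℝ) < k := by exact_mod_cast hk
  have hx : 0 < 1 / p := by positivity
  have hy : 0 < 1 - 1 / p := by rw [sub_pos, div_lt_one (by linarith)]; exact hp
  have := Gamma_pos_of_pos hx
  have := Gamma_pos_of_pos hy
  have := Gamma_pos_of_pos (show 0 < 1 / p + k / 2 by positivity)
  have := Gamma_pos_of_pos (show 0 < 1 - 1 / p + k / 2 by positivity)
  have hpow : (k : ℝ) ^ (1 - 1 / p) = (k : ℝ) ^ (1 - 2 / p) * (k : ℝ) ^ (1 / p) := by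
    rw [← rpow_add hk0]; ring_nf
  unfold gammaRatio gammaPhi
  rw [Gamma_add_one hx.ne', Gamma_add_one hy.ne', hpow]
  field_simp

theorem tendsto_gammaPhi_one_sub_inv_div (hk : 0 < k) :
    Tendsto (fun p : ℝ => gammaPhi k (1 - 1 / p) / gammaPhi k (1 / p)) atTop (𝓝 (1 / 2)) := by
  have h0 : Tendsto (fun p : ℝ => 1 / p) atTop (𝓝 0) := tendsto_const_nhds.div_atTop tendsto_id
  rw [← gammaPhi_one_div_gammaPhi_zero hk]
  refine Tendsto.div ?_ ?_ (gammaPhi_pos hk le_rfl).ne'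
  · exact (continuousAt_gammaPhi hk zero_le_one).tendsto.comp
      (by simpa using tendsto_const_nhds.sub h0)
  · exact (continuousAt_gammaPhi hk le_rfl).tendsto.comp h0

end gammaPhi

theorem gammaRatio_bounds :
    (∀ k : ℕ, 1 ≤ k → ∀ p : ℝ, 2 ≤ p →
      1 / 2 ≤ gammaRatio k p / ((k : ℝ) ^ (1 - 2 / p) * (p - 1)) ∧
      gammaRatio k p / ((k : ℝ) ^ (1 - 2 / p) * (p - 1)) ≤ 1) ∧
    (∀ c : ℝ, 1 / 2 < c → ∃ k : ℕ, 1 ≤ k ∧ ∃ p : ℝ, 2 ≤ p ∧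
      gammaRatio k p / ((k : ℝ) ^ (1 - 2 / p) * (p - 1)) < c) ∧
    (∀ C : ℝ, C < 1 → ∃ k : ℕ, 1 ≤ k ∧ ∃ p : ℝ, 2 ≤ p ∧
      C < gammaRatio k p / ((k : ℝ) ^ (1 - 2 / p) * (p - 1))) := by
  refine ⟨fun k hk p hp => ?_, fun c hc => ?_, fun C hC => ?_⟩
  · have hx : 0 ≤ 1 / p := by positivity
    have hxy : 1 / p ≤ 1 - 1 / p := by linarith [one_div_le_one_div_of_le two_pos hp]
    have hy1 : 1 - 1 / p ≤ 1 := by linarith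
    have hφx := gammaPhi_pos hk hx
    rw [gammaRatio_div_eq_gammaPhi_div hk (by linarith)]
    refine ⟨?_, div_le_one_of_le₀ (gammaPhi_antitoneOn hk hx (hx.trans hxy) hxy) hφx.le⟩
    rw [← gammaPhi_one_div_gammaPhi_zero hk]
    exact div_le_div₀ (gammaPhi_pos hk (hx.trans hxy)).le
      (gammaPhi_antitoneOn hk (hx.trans hxy) (mem_Ici.2 zero_le_one) hy1) hφx
      (gammaPhi_antitoneOn hk self_mem_Ici hx hx)
  · obtain ⟨p, hpc, hp⟩ := (((tendsto_gammaPhi_one_sub_inv_div one_pos).eventually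
      (gt_mem_nhds hc)).and (eventually_ge_atTop 2)).exists
    exact ⟨1, le_rfl, p, hp, by rwa [gammaRatio_div_eq_gammaPhi_div one_pos (by linarith)]⟩
  · refine ⟨1, le_rfl, 2, le_rfl, ?_⟩
    rw [gammaRatio_div_eq_gammaPhi_div one_pos one_lt_two, show (1 : ℝ) - 1 / 2 = 1 / 2 by norm_num,
      div_self (gammaPhi_pos one_pos (by norm_num)).ne']
    exact hC
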